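/- arXiv:2503.10018 — 3 statements merged into one kernel-verified Lean document; each statement's English description precedes it below -/
import Mathlib

section
/- Let G₀ be a finite directed graph whose adjacency matrix A_{G₀} has leading eigenvalue λ₀ ≥ 1, let n ≥ 1 be an integer, and let G be an n-augmented graph of G₀. Then the leading eigenvalue λ ≥ 1 of the adjacency matrix A_G satisfies λⁿ = λ₀. -/
noncomputable section
open Matrix

/-- A finite directed multigraph. -/
structure MultiDigraph where
  V : Type
  E : Type
  [fintypeV : Fintype V]
  [fintypeE : Fintype E]
  src : E → V
  tgt : E → V

attribute [instance] MultiDigraph.fintypeV MultiDigraph.fintypeE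

/-- The adjacency matrix of a finite directed multigraph: its `(v,w)` entry counts the
directed edges from `v` to `w`. -/
def MultiDigraph.adjMatrix (G : MultiDigraph) : Matrix G.V G.V ℝ :=
  fun v w => ({e : G.E | G.src e = v ∧ G.tgt e = w}.ncard : ℝ)

/-- `G` is an `n`-augmented graph of `G₀`: each directed edge of `G₀` is replaced by a
directed path of length `n` through `n − 1` newly inserted vertices (inserted vertices
being distinct for distinct edges). -/
def IsAugmentation (n : ℕ) (G₀ G : MultiDigraph) : Prop :=
  ∃ (ιV : G₀.V → G.V) (ve : G₀.E × Fin (n - 1) → G.V) (pe : G₀.E × Fin n → G.E),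
    Function.Bijective (Sum.elim ιV ve) ∧
    Function.Bijective pe ∧
    ∀ (e : G₀.E) (i : Fin n),
      (G.src (pe (e, i)) =
        if h : (i : ℕ) = 0 then ιV (G₀.src e)
        else ve (e, ⟨(i : ℕ) - 1, by have := i.isLt; omega⟩)) ∧
      (G.tgt (pe (e, i)) =
        if h : (i : ℕ) = n - 1 then ιV (G₀.tgt e)
        else ve (e, ⟨(i : ℕ), by have := i.isLt; omega⟩))

/-- `μ` is the leading (largest real) eigenvalue of the real matrix `A`. -/
def IsLeadingEigenvalue {m : Type*} [Fintype m] (A : Matrix m m ℝ) (μ : ℝ) : Prop :=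
  (∃ v : m → ℝ, v ≠ 0 ∧ A.mulVec v = μ • v) ∧
  ∀ μ' : ℝ, (∃ v : m → ℝ, v ≠ 0 ∧ A.mulVec v = μ' • v) → μ' ≤ μ

open scoped Classical

lemma mulVec_adj (H : MultiDigraph) (w : H.V → ℝ) (x : H.V) :
    H.adjMatrix.mulVec w x = ∑ e : H.E, if H.src e = x then w (H.tgt e) else 0 := by
  classical
  simp only [Matrix.mulVec, dotProduct, MultiDigraph.adjMatrix]
  have h1 : ∀ y : H.V, ({e : H.E | H.src e = x ∧ H.tgt e = y}.ncard : ℝ) * w y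
      = ∑ e : H.E, if H.src e = x ∧ H.tgt e = y then w y else 0 := by
    intro y
    rw [Set.ncard_eq_toFinset_card', Set.toFinset_setOf, ← Finset.sum_filter]
    simp [Finset.sum_const, nsmul_eq_mul]
  rw [Finset.sum_congr rfl fun y _ => h1 y, Finset.sum_comm]
  refine Finset.sum_congr rfl fun e _ => ?_
  by_cases h : H.src e = x
  · simp [h]
  · simp [h]

section Aug
variable {n : ℕ} {G₀ G : MultiDigraph}
  {ιV : G₀.V → G.V} {ve : G₀.E × Fin (n-1) → G.V} {pe : G₀.E × Fin n → G.E}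
  (hn : 1 ≤ n)
  (hV : Function.Bijective (Sum.elim ιV ve))
  (hE : Function.Bijective pe)
  (hst : ∀ (e : G₀.E) (i : Fin n),
      (G.src (pe (e, i)) =
        if h : (i : ℕ) = 0 then ιV (G₀.src e)
        else ve (e, ⟨(i : ℕ) - 1, by have := i.isLt; omega⟩)) ∧
      (G.tgt (pe (e, i)) =
        if h : (i : ℕ) = n - 1 then ιV (G₀.tgt e)
        else ve (e, ⟨(i : ℕ), by have := i.isLt; omega⟩)))

include hV in
lemma hdisj : ∀ (u : G₀.V) (p : G₀.E × Fin (n-1)), ιV u ≠ ve p := by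
  intro u p h
  have := hV.1 (a₁ := Sum.inl u) (a₂ := Sum.inr p) h
  simp at this

include hV in
lemma hιV_inj : Function.Injective ιV := by
  intro a b h
  have := hV.1 (a₁ := Sum.inl a) (a₂ := Sum.inl b) h
  simpa using this

include hV in
lemma hve_inj : Function.Injective ve := by
  intro a b h
  have := hV.1 (a₁ := Sum.inr a) (a₂ := Sum.inr b) h
  simpa using this

include hE in
lemma mulVecG (w : G.V → ℝ) (x : G.V) :
    G.adjMatrix.mulVec w x
      = ∑ p : G₀.E × Fin n, if G.src (pe p) = x then w (G.tgt (pe p)) else 0 := by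
  rw [mulVec_adj]
  exact (Fintype.sum_bijective pe hE _ _ (fun p => rfl)).symm

include hn hV hE hst in
lemma mulVecG_ve (w : G.V → ℝ) (e : G₀.E) (j : Fin (n-1)) :
    G.adjMatrix.mulVec w (ve (e, j))
      = w (G.tgt (pe (e, ⟨(j:ℕ)+1, by have := j.isLt; omega⟩))) := by
  rw [mulVecG hE]
  have hj1 : ((j:ℕ)+1) < n := by have := j.isLt; omega
  have hsrc : G.src (pe (e, ⟨(j:ℕ)+1, hj1⟩)) = ve (e, j) := by
    rw [(hst e ⟨(j:ℕ)+1, hj1⟩).1, dif_neg (by simp)]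
    congr 1
  rw [Fintype.sum_eq_single ((e, ⟨(j:ℕ)+1, hj1⟩) : G₀.E × Fin n)]
  · rw [if_pos hsrc]
  · rintro ⟨e', i⟩ hne
    rw [if_neg]
    rw [(hst e' i).1]
    split_ifs with h
    · exact hdisj hV _ _
    · intro hcon
      have := hve_inj hV hcon
      apply hne
      have h1 := congrArg Prod.fst this
      have h2 := congrArg (fun p => ((Prod.snd p : Fin (n-1)) : ℕ)) this
      simp at h1 h2
      ext
      · exact h1
      · simp; omega

include hn hV hE hst in
lemma mulVecG_iV (w : G.V → ℝ) (u : G₀.V) :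
    G.adjMatrix.mulVec w (ιV u)
      = ∑ e' : G₀.E, if G₀.src e' = u
          then w (G.tgt (pe (e', ⟨0, by omega⟩))) else 0 := by
  rw [mulVecG hE, Fintype.sum_prod_type]
  refine Finset.sum_congr rfl fun e' _ => ?_
  rw [Fintype.sum_eq_single (⟨0, by omega⟩ : Fin n)]
  · rw [(hst e' ⟨0, by omega⟩).1, dif_pos rfl]
    by_cases h : G₀.src e' = u
    · rw [if_pos (by rw [h]), if_pos h]
    · rw [if_neg (fun hc => h (hιV_inj hV hc)), if_neg h]
  · intro i hi
    rw [(hst e' i).1, dif_neg (by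
      intro hc; apply hi; ext; simpa using hc)]
    rw [if_neg (fun hc => hdisj hV _ _ hc.symm)]

-- path lemma: for an eigenvector of G with eigenvalue lam,
-- lam^(n-1-j) * w(ve(e,j)) = w(ιV (tgt e))
include hn hV hE hst in
lemma path_lemma (w : G.V → ℝ) (lam : ℝ)
    (hw : ∀ x, G.adjMatrix.mulVec w x = lam * w x) (e : G₀.E) :
    ∀ d (j : Fin (n-1)), n - 1 - (j:ℕ) = d →
      lam ^ d * w (ve (e, j)) = w (ιV (G₀.tgt e)) := by
  intro d
  induction d with
  | zero => intro j hj; exfalso; have := j.isLt; omega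
  | succ d ih =>
    intro j hj
    have hjlt := j.isLt
    have step : lam * w (ve (e, j))
        = w (G.tgt (pe (e, ⟨(j:ℕ)+1, by omega⟩))) := by
      rw [← hw, mulVecG_ve hn hV hE hst]
    rw [(hst e ⟨(j:ℕ)+1, by omega⟩).2] at step
    by_cases h : (j:ℕ)+1 = n-1
    · rw [dif_pos (by simpa using h)] at step
      have hd : d = 0 := by omega
      subst hd
      rw [pow_one]
      rw [← step]
    · rw [dif_neg (by simpa using h)] at step
      have hjn : (j:ℕ)+1 < n-1 := by omega
      have step' : lam * w (ve (e, j)) = w (ve (e, ⟨(j:ℕ)+1, hjn⟩)) := step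
      calc lam ^ (d+1) * w (ve (e, j)) = lam^d * (lam * w (ve (e, j))) := by ring
        _ = lam^d * w (ve (e, ⟨(j:ℕ)+1, hjn⟩)) := by rw [step']
        _ = w (ιV (G₀.tgt e)) := ih _ (by simp; omega)

end Aug

/-- **Lemma.**  If `G` is an `n`-augmented graph of a finite directed graph `G₀` whose
adjacency matrix has leading eigenvalue `λ₀ ≥ 1`, then the leading eigenvalue `λ ≥ 1`
of the adjacency matrix of `G` satisfies `λⁿ = λ₀`. -/
theorem leadingEigenvalue_augmented
    (n : ℕ) (hn : 1 ≤ n) (G₀ G : MultiDigraph)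
    (hG : IsAugmentation n G₀ G)
    (lam0 lam : ℝ)
    (h0 : IsLeadingEigenvalue G₀.adjMatrix lam0) (h01 : 1 ≤ lam0)
    (h1 : IsLeadingEigenvalue G.adjMatrix lam) (h11 : 1 ≤ lam) :
    lam ^ n = lam0 := by
  unfold IsAugmentation at hG
  obtain ⟨ιV, ve, pe, hV, hE, hst⟩ := hG
  have hlam_pos : (0:ℝ) < lam := lt_of_lt_of_le one_pos h11
  have hlam0_pos : (0:ℝ) < lam0 := lt_of_lt_of_le one_pos h01
  -- Direction 1 : lam ^ n ≤ lam0
  have dir1 : lam ^ n ≤ lam0 := by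
    obtain ⟨w, hw0, hw⟩ := h1.1
    have hw' : ∀ x, G.adjMatrix.mulVec w x = lam * w x := by
      intro x; rw [hw]; rfl
    set v : G₀.V → ℝ := fun u => w (ιV u) with hv_def
    -- key : lam^(n-1) * w (tgt (pe (e',0))) = v (tgt e')
    have key : ∀ e' : G₀.E, lam ^ (n-1) * w (G.tgt (pe (e', ⟨0, by omega⟩))) = v (G₀.tgt e') := by
      intro e'
      rw [(hst e' ⟨0, by omega⟩).2]
      split_ifs with h
      · have hn1 : n - 1 = 0 := by simpa using h.symm
        rw [hn1, pow_zero, one_mul]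
      · have hn2 : 1 ≤ n - 1 := by
          rcases Nat.lt_or_ge (n-1) 1 with h' | h'
          · exfalso; apply h; omega
          · exact h'
        exact path_lemma hn hV hE hst w lam hw' e' (n-1) ⟨0, by omega⟩ (by simp)
    have heig : G₀.adjMatrix.mulVec v = (lam ^ n) • v := by
      funext u
      rw [mulVec_adj]
      have h2 : ∀ e' : G₀.E,
          (if G₀.src e' = u then v (G₀.tgt e') else 0)
          = lam ^ (n-1) * (if G₀.src e' = u then w (G.tgt (pe (e', ⟨0, by omega⟩))) else 0) := by
        intro e'
        split_ifs with h
        · rw [key]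
        · rw [mul_zero]
      rw [Finset.sum_congr rfl fun e' _ => h2 e', ← Finset.mul_sum,
          ← mulVecG_iV hn hV hE hst, hw']
      have : lam ^ (n-1) * (lam * w (ιV u)) = lam ^ n * v u := by
        rw [hv_def]
        have : lam ^ n = lam ^ (n-1) * lam := by
          rw [← pow_succ]; congr 1; omega
        rw [this]; ring
      rw [this]; rfl
    have hv0 : v ≠ 0 := by
      intro hv
      apply hw0
      funext x
      obtain ⟨s, hs⟩ := hV.2 x
      cases s with
      | inl u =>
        have : w (ιV u) = 0 := by
          have := congrFun hv u; simpa [hv_def] using this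
        rw [← hs]; simpa using this
      | inr p =>
        obtain ⟨e, j⟩ := p
        have hp := path_lemma hn hV hE hst w lam hw' e (n - 1 - (j:ℕ)) j rfl
        have hz : v (G₀.tgt e) = 0 := by simpa using congrFun hv (G₀.tgt e)
        have hp2 : lam ^ (n - 1 - (j:ℕ)) * w (ve (e, j)) = v (G₀.tgt e) := hp
        have : w (ve (e, j)) = 0 := by
          have hpow : lam ^ (n - 1 - (j:ℕ)) ≠ 0 := pow_ne_zero _ (ne_of_gt hlam_pos)
          have := hp2.trans hz
          exact (mul_eq_zero.mp this).resolve_left hpow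
        rw [← hs]; simpa using this
    exact h0.2 _ ⟨v, hv0, heig⟩
  -- Direction 2 : lam0 ≤ lam ^ n
  have dir2 : lam0 ≤ lam ^ n := by
    obtain ⟨v, hv0, hv⟩ := h0.1
    have hv' : ∀ u, G₀.adjMatrix.mulVec v u = lam0 * v u := by
      intro u; rw [hv]; rfl
    set μ : ℝ := lam0 ^ ((n:ℝ)⁻¹) with hμ_def
    have hμpos : 0 < μ := Real.rpow_pos_of_pos hlam0_pos _
    have hμn : μ ^ n = lam0 := by
      rw [hμ_def, ← Real.rpow_natCast (lam0 ^ ((n:ℝ)⁻¹)) n, ← Real.rpow_mul hlam0_pos.le]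
      rw [inv_mul_cancel₀ (Nat.cast_ne_zero.mpr (by omega : n ≠ 0))]
      exact Real.rpow_one lam0
    set Vq := Equiv.ofBijective _ hV with hVq_def
    set w : G.V → ℝ := fun x =>
      Sum.elim (fun u => μ ^ (n-1) * v u)
        (fun p : G₀.E × Fin (n-1) => μ ^ ((p.2 : ℕ)) * v (G₀.tgt p.1)) (Vq.symm x) with hw_def
    have hw1 : ∀ u, w (ιV u) = μ ^ (n-1) * v u := by
      intro u
      show Sum.elim _ _ (Vq.symm (Vq (Sum.inl u))) = _
      rw [Equiv.symm_apply_apply]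
      rfl
    have hw2 : ∀ (e : G₀.E) (j : Fin (n-1)), w (ve (e, j)) = μ ^ ((j:ℕ)) * v (G₀.tgt e) := by
      intro e j
      show Sum.elim _ _ (Vq.symm (Vq (Sum.inr (e, j)))) = _
      rw [Equiv.symm_apply_apply]
      rfl
    have heig : G.adjMatrix.mulVec w = μ • w := by
      funext x
      obtain ⟨s, hs⟩ := hV.2 x
      rw [← hs]
      cases s with
      | inl u =>
        show G.adjMatrix.mulVec w (ιV u) = μ * w (ιV u)
        rw [mulVecG_iV hn hV hE hst]
        have hte : ∀ e' : G₀.E, w (G.tgt (pe (e', ⟨0, by omega⟩))) = v (G₀.tgt e') := by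
          intro e'
          rw [(hst e' ⟨0, by omega⟩).2]
          split_ifs with h
          · rw [hw1]
            have hn1 : n - 1 = 0 := by simpa using h.symm
            rw [hn1, pow_zero, one_mul]
          · rw [hw2]; simp
        rw [Finset.sum_congr rfl fun e' _ => by rw [show
            (if G₀.src e' = u then w (G.tgt (pe (e', ⟨0, by omega⟩))) else 0)
            = (if G₀.src e' = u then v (G₀.tgt e') else 0) from by split_ifs with h; exacts [hte e', rfl]]]
        rw [← mulVec_adj, hv', hw1]
        have : lam0 = μ * μ ^ (n-1) := by
          rw [← pow_succ']
          rw [show n - 1 + 1 = n by omega, hμn]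
        rw [this]; ring
      | inr p =>
        obtain ⟨e, j⟩ := p
        show G.adjMatrix.mulVec w (ve (e, j)) = μ * w (ve (e, j))
        rw [mulVecG_ve hn hV hE hst]
        have hj1 : ((j:ℕ)+1) < n := by have := j.isLt; omega
        rw [(hst e ⟨(j:ℕ)+1, hj1⟩).2]
        split_ifs with h
        · rw [hw1, hw2]
          have hj2 : n - 1 = (j:ℕ) + 1 := by simpa using h.symm
          have hpow : μ ^ (n-1) = μ ^ ((j:ℕ)+1) := congrArg (fun k => μ ^ k) hj2
          rw [hpow, pow_succ]; ring
        · have hlt : (j:ℕ)+1 < n-1 := by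
            have := j.isLt
            have h' : ¬ ((j:ℕ)+1 = n-1) := by simpa using h
            omega
          rw [hw2 e j]
          show w (ve (e, ⟨(j:ℕ)+1, hlt⟩)) = μ * (μ ^ ((j:ℕ)) * v (G₀.tgt e))
          rw [hw2]
          show μ ^ ((j:ℕ)+1) * v (G₀.tgt e) = _
          rw [pow_succ]; ring
    have hw0 : w ≠ 0 := by
      intro hw
      rcases Function.ne_iff.mp hv0 with ⟨u, hu⟩
      apply hu
      have := congrFun hw (ιV u)
      rw [hw1] at this
      have hμp : μ ^ (n-1) ≠ 0 := pow_ne_zero _ (ne_of_gt hμpos)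
      simpa [hμp] using this
    have hle : μ ≤ lam := h1.2 _ ⟨w, hw0, heig⟩
    calc lam0 = μ ^ n := hμn.symm
      _ ≤ lam ^ n := pow_le_pow_left₀ hμpos.le hle n
  linarith


end
end

section
/- Let K be a field of characteristic 0, complete with respect to a nontrivial non-archimedean absolute value |·| whose value group |K^×| is discrete, with uniformizer 𝔲, and let A be an admissible n×n (0,1)-matrix. Then there exist n pairwise disjoint rational closed disks D̄_1,…,D̄_n in K and a map f : ⋃_{i=1}^n D̄_i → K that is linearly compatible to A and moreover satisfies: (1) D̄_i ⊊ D̄(0,1) and D̄_i ∩ D̄(0,|𝔲|) = ∅ for each 1 ≤ i ≤ n; (2) ⋃_{j ∈ I_A(i)} D̄_j ⊊ f(D̄_i) for each 1 ≤ i ≤ n. -/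
noncomputable section
open Matrix Metric

/-- An admissible matrix: an irreducible matrix with non-negative entries satisfying
the non-zero, constant, containing and Markov properties. -/
def IsAdmissible {n : ℕ} (A : Matrix (Fin n) (Fin n) ℝ) : Prop :=
  (∀ i j, 0 ≤ A i j) ∧
  (∀ i j, ∃ k : ℕ, 0 < k ∧ 0 < (A ^ k) i j) ∧
  (∀ i, ∃ j, A i j ≠ 0) ∧ (∀ j, ∃ i, A i j ≠ 0) ∧
  (∀ i j j', A i j ≠ 0 → A i j' ≠ 0 → A i j = A i j') ∧
  (∀ i₁ i₂, (∃ j, A i₁ j ≠ 0 ∧ A i₂ j ≠ 0) →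
    {j | A i₁ j ≠ 0} ⊆ {j | A i₂ j ≠ 0} ∨ {j | A i₂ j ≠ 0} ⊆ {j | A i₁ j ≠ 0}) ∧
  (∀ i, ∃ m : ℕ, 0 < m ∧ ∃ j j', j ≠ j' ∧ (A ^ m) i j ≠ 0 ∧ (A ^ m) i j' ≠ 0)

variable {K : Type*} [NormedField K]

/-- `f` is linearly compatible to the `(0,1)`-matrix `A` on the disks `D i`:
its restriction to each `D i` is affine linear, and `D j ⊆ f(D i)` iff `A i j = 1`. -/
def LinearlyCompatible {n : ℕ} (A : Matrix (Fin n) (Fin n) ℝ)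
    (D : Fin n → Set K) (f : K → K) : Prop :=
  (∀ i, ∃ α β : K, α ≠ 0 ∧ ∀ z ∈ D i, f z = α * z + β) ∧
  (∀ i j, D j ⊆ f '' D i ↔ A i j = 1)

lemma na_add_eq_left (hna : IsNonarchimedean fun x : K => ‖x‖)
    {x y : K} (h : ‖y‖ < ‖x‖) : ‖x + y‖ = ‖x‖ := by
  refine le_antisymm ?_ ?_
  · have := hna x y
    simpa [max_eq_left h.le] using this
  · have h2 := hna (x + y) (-y)
    simp only [add_neg_cancel_right, norm_neg] at h2
    rcases le_max_iff.mp h2 with h1 | h1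
    · exact h1
    · exact absurd h1 (not_le.mpr h)

lemma na_sum_le (hna : IsNonarchimedean fun x : K => ‖x‖)
    {ι : Type*} {S : Finset ι} {f : ι → K} {b : ℝ} (hb : 0 ≤ b)
    (h : ∀ e ∈ S, ‖f e‖ ≤ b) : ‖∑ e ∈ S, f e‖ ≤ b := by
  classical
  induction S using Finset.induction with
  | empty => simpa using hb
  | @insert a s hx ih =>
    rw [Finset.sum_insert hx]
    refine (hna _ _).trans (max_le (h a (by simp)) (ih fun e he => h e (by simp [he])))

lemma na_sum_pow_eq (hna : IsNonarchimedean fun x : K => ‖x‖)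
    {u : K} (hu0 : u ≠ 0) (hu1 : ‖u‖ < 1)
    {S : Finset ℕ} (hS : S.Nonempty) {c : ℕ → K} (hc : ∀ e ∈ S, ‖c e‖ = 1) :
    ‖∑ e ∈ S, c e * u ^ e‖ = ‖u‖ ^ S.min' hS := by
  classical
  have hq0 : (0:ℝ) < ‖u‖ := norm_pos_iff.mpr hu0
  set e0 := S.min' hS with he0
  have he0S : e0 ∈ S := S.min'_mem hS
  rw [← Finset.insert_erase he0S, Finset.sum_insert (Finset.notMem_erase _ _)]
  have hrest : ‖∑ e ∈ S.erase e0, c e * u ^ e‖ ≤ ‖u‖ ^ (e0 + 1) := by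
    refine na_sum_le hna (by positivity) fun e he => ?_
    have he1 : e0 + 1 ≤ e := by
      have := S.min'_le e (Finset.mem_of_mem_erase he)
      have hne : e ≠ e0 := Finset.ne_of_mem_erase he
      omega
    rw [norm_mul, hc e (Finset.mem_of_mem_erase he), one_mul, norm_pow]
    exact pow_le_pow_of_le_one hq0.le hu1.le he1
  have hhead : ‖c e0 * u ^ e0‖ = ‖u‖ ^ e0 := by
    rw [norm_mul, hc e0 he0S, one_mul, norm_pow]
  rw [na_add_eq_left hna (by rw [hhead]; exact lt_of_le_of_lt hrest (by
    exact pow_lt_pow_right_of_lt_one₀ hq0 hu1 (Nat.lt_succ_self e0))), hhead]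

lemma affine_image_closedBall {α b c : K} (ha : α ≠ 0) (r : ℝ) :
    (fun z => α * (z - c) + b) '' Metric.closedBall c r
      = Metric.closedBall b (‖α‖ * r) := by
  ext y
  simp only [Set.mem_image, Metric.mem_closedBall, dist_eq_norm]
  constructor
  · rintro ⟨z, hz, rfl⟩
    simp only [add_sub_cancel_right, norm_mul]
    exact mul_le_mul_of_nonneg_left hz (norm_nonneg _)
  · intro hy
    refine ⟨c + α⁻¹ * (y - b), ?_, by field_simp; ring⟩
    rw [add_sub_cancel_left, norm_mul, norm_inv]
    rw [inv_mul_le_iff₀ (norm_pos_iff.mpr ha)]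
    linarith [hy]

/-- **Lemma.**  Let `K` be a complete non-archimedean field of characteristic `0` with
discrete value group and uniformizer `u`, and let `A` be an admissible `n × n`
`(0,1)`-matrix.  Then there are `n` pairwise disjoint rational closed disks
`D̄_1, …, D̄_n` in `K` and a map `f : ⋃ D̄_i → K` linearly compatible to `A`, which
moreover satisfies `D̄_i ⊊ D̄(0,1)`, `D̄_i ∩ D̄(0,|u|) = ∅` and
`⋃_{j ∈ I_A(i)} D̄_j ⊊ f(D̄_i)` for each `i`. -/
theorem exists_linearly_compatible_map
    [CompleteSpace K] [CharZero K]
    (hna : IsNonarchimedean fun x : K => ‖x‖)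
    (u : K) (hu0 : u ≠ 0) (hu1 : ‖u‖ < 1)
    (hgen : ∀ x : K, x ≠ 0 → ∃ m : ℤ, ‖x‖ = ‖u‖ ^ m)
    {n : ℕ} (A : Matrix (Fin n) (Fin n) ℝ)
    (hA : IsAdmissible A) (h01 : ∀ i j, A i j = 0 ∨ A i j = 1) :
    ∃ (a : Fin n → K) (r : Fin n → ℝ) (f : K → K),
      (∀ i, ∃ x : K, x ≠ 0 ∧ ‖x‖ = r i) ∧
      (Pairwise fun i j => Disjoint (Metric.closedBall (a i) (r i))
        (Metric.closedBall (a j) (r j))) ∧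
      (∀ i, Metric.closedBall (a i) (r i) ⊂ Metric.closedBall (0 : K) 1) ∧
      (∀ i, Disjoint (Metric.closedBall (a i) (r i)) (Metric.closedBall (0 : K) ‖u‖)) ∧
      LinearlyCompatible A (fun i => Metric.closedBall (a i) (r i)) f ∧
      (∀ i, (⋃ j ∈ {j | A i j ≠ 0}, Metric.closedBall (a j) (r j))
        ⊂ f '' Metric.closedBall (a i) (r i)) := by
  classical
  obtain ⟨-, -, hrow, -, -, hlam, -⟩ := hA
  set q : ℝ := ‖u‖ with hq
  have hq0 : (0:ℝ) < q := norm_pos_iff.mpr hu0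
  have htri : ∀ x y z : K, ‖x - z‖ ≤ max ‖x - y‖ ‖y - z‖ := by
    intro x y z
    have := hna (x - y) (y - z)
    simpa using this
  -- basic combinatorial data
  set F : Fin n → Finset (Fin n) := fun i => Finset.univ.filter (fun j => A i j ≠ 0) with hF
  have hFne : ∀ i, (F i).Nonempty := by
    intro i
    obtain ⟨j, hj⟩ := hrow i
    exact ⟨j, Finset.mem_filter.mpr ⟨Finset.mem_univ j, hj⟩⟩
  have hFcard : ∀ i, 1 ≤ (F i).card ∧ (F i).card ≤ n := by
    intro i
    refine ⟨Finset.card_pos.mpr (hFne i), ?_⟩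
    have : F i ⊆ Finset.univ := Finset.filter_subset _ _
    simpa using Finset.card_le_card this
  set w : Fin n → ℕ := fun i => n * (n - (F i).card) + i with hw
  have hwub : ∀ i, w i + 1 ≤ n * n := by
    intro i
    have h1 := (hFcard i).1
    have h2 : n * (n - (F i).card) ≤ n * (n - 1) :=
      Nat.mul_le_mul_left n (by omega)
    have h3 : i.val < n := i.isLt
    have h4 : n * (n-1) + n = n * n := by
      cases n with
      | zero => simp
      | succ m => simp [Nat.succ_sub_one]; ring
    simp only [hw]
    omega
  have hwinj : Function.Injective w := by
    intro i i' hii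
    simp only [hw] at hii
    by_contra hne
    have hiv : i.val ≠ i'.val := fun h => hne (Fin.ext h)
    rcases Nat.lt_trichotomy (n - (F i).card) (n - (F i').card) with h | h | h
    · have : n * (n - (F i).card) + n ≤ n * (n - (F i').card) := by
        have := Nat.mul_le_mul_left n (Nat.succ_le_of_lt h)
        simpa [Nat.mul_succ] using this
      have := i.isLt
      omega
    · rw [h] at hii; omega
    · have : n * (n - (F i').card) + n ≤ n * (n - (F i).card) := by
        have := Nat.mul_le_mul_left n (Nat.succ_le_of_lt h)
        simpa [Nat.mul_succ] using this
      have := i'.isLt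
      omega
  -- laminar weight comparison
  have hlamw : ∀ i i' j j', A i j ≠ 0 → A i j' ≠ 0 → A i' j ≠ 0 → A i' j' = 0 →
      w i + 1 ≤ w i' := by
    intro i i' j j' hij hij' hi'j hi'j'
    have hsub : {j | A i' j ≠ 0} ⊆ {j | A i j ≠ 0} := by
      rcases hlam i' i ⟨j, hi'j, hij⟩ with h | h
      · exact h
      · exact absurd (h (by simpa using hij')) (by simp [hi'j'])
    have hss : F i' ⊂ F i := by
      constructor
      · intro x hx
        simp only [hF, Finset.mem_filter, Finset.mem_univ, true_and] at hx ⊢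
        exact hsub hx
      · intro hcon
        have := hcon (by simp [hF, hij'] : j' ∈ F i)
        simp [hF, hi'j'] at this
    have hcard : (F i').card < (F i).card := Finset.card_lt_card hss
    have h2 := (hFcard i).2
    have : n * (n - (F i).card) + n ≤ n * (n - (F i').card) := by
      have := Nat.mul_le_mul_left n (by omega : n - (F i).card + 1 ≤ n - (F i').card)
      simpa [Nat.mul_succ] using this
    have := i.isLt
    simp only [hw]
    omega
  -- exponent sets and centers
  set T : ℕ := n * n + 1 with hT
  set M : ℕ := n * n + n + 1 with hM
  set G : Fin n → Finset (Fin n) := fun j => Finset.univ.filter (fun i => A i j ≠ 0) with hG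
  set E : Fin n → Finset ℕ :=
    fun j => (G j).image (fun i => w i + 1) ∪ {T + j.val} with hE
  have hEmem : ∀ j e, e ∈ E j ↔ (∃ i, A i j ≠ 0 ∧ e = w i + 1) ∨ e = T + j.val := by
    intro j e
    simp only [hE, Finset.mem_union, Finset.mem_image, Finset.mem_singleton, hG,
      Finset.mem_filter, Finset.mem_univ, true_and]
    constructor
    · rintro (⟨i, hi, rfl⟩ | h)
      · exact Or.inl ⟨i, hi, rfl⟩
      · exact Or.inr h
    · rintro (⟨i, hi, rfl⟩ | h)
      · exact Or.inl ⟨i, hi, rfl⟩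
      · exact Or.inr h
  have hErange : ∀ j, ∀ e ∈ E j, 1 ≤ e ∧ e ≤ n * n + n := by
    intro j e he
    rcases (hEmem j e).mp he with ⟨i, -, rfl⟩ | rfl
    · have := hwub i; omega
    · have := j.isLt; omega
  set a : Fin n → K := fun j => 1 + ∑ e ∈ E j, u ^ e with ha
  -- difference representation
  set S : Fin n → Fin n → Finset ℕ := fun j j' => (E j \ E j') ∪ (E j' \ E j) with hS
  set c : Fin n → Fin n → ℕ → K := fun j j' e => if e ∈ E j then 1 else -1 with hc
  have hdiff : ∀ j j', a j - a j' = ∑ e ∈ S j j', c j j' e * u ^ e := by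
    intro j j'
    have hdisj : Disjoint (E j \ E j') (E j' \ E j) := disjoint_sdiff_sdiff
    rw [hS]
    rw [Finset.sum_union hdisj]
    have h1 : ∑ e ∈ E j \ E j', c j j' e * u ^ e = ∑ e ∈ E j \ E j', u ^ e := by
      refine Finset.sum_congr rfl fun e he => ?_
      rw [hc]; simp [(Finset.mem_sdiff.mp he).1]
    have h2 : ∑ e ∈ E j' \ E j, c j j' e * u ^ e = -∑ e ∈ E j' \ E j, u ^ e := by
      rw [← Finset.sum_neg_distrib]
      refine Finset.sum_congr rfl fun e he => ?_
      rw [hc]; simp [(Finset.mem_sdiff.mp he).2]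
    rw [h1, h2, ha]
    have e1 : ∑ e ∈ E j \ E j', u ^ e
        = ∑ e ∈ E j, u ^ e - ∑ e ∈ E j ∩ E j', u ^ e := by
      rw [eq_sub_iff_add_eq, ← Finset.sum_union (Finset.disjoint_sdiff_inter _ _),
        Finset.sdiff_union_inter]
    have e2 : ∑ e ∈ E j' \ E j, u ^ e
        = ∑ e ∈ E j', u ^ e - ∑ e ∈ E j' ∩ E j, u ^ e := by
      rw [eq_sub_iff_add_eq, ← Finset.sum_union (Finset.disjoint_sdiff_inter _ _),
        Finset.sdiff_union_inter]
    rw [e1, e2, Finset.inter_comm]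
    ring
  have hcnorm : ∀ j j' e, ‖c j j' e‖ = 1 := by
    intro j j' e
    rw [hc]
    by_cases h : e ∈ E j <;> simp [h]
  have hSne : ∀ j j', j ≠ j' → (T + j.val) ∈ S j j' := by
    intro j j' hne
    rw [hS]
    refine Finset.mem_union_left _ (Finset.mem_sdiff.mpr ⟨?_, ?_⟩)
    · exact (hEmem j _).mpr (Or.inr rfl)
    · intro hcon
      rcases (hEmem j' _).mp hcon with ⟨i, -, hi⟩ | h
      · have := hwub i; omega
      · have : j.val = j'.val := by omega
        exact hne (Fin.ext this)
  -- norm of differences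
  have hdistnorm : ∀ j j', j ≠ j' →
      ∃ m : ℕ, ‖a j - a j'‖ = q ^ m ∧ 1 ≤ m ∧ m ≤ n * n + n ∧
        (∀ e ∈ S j j', m ≤ e) ∧ m ∈ S j j' := by
    intro j j' hne
    have hS0 : (S j j').Nonempty := ⟨_, hSne j j' hne⟩
    have hm := (S j j').min'_mem hS0
    have hm2 : (S j j').min' hS0 ∈ E j ∪ E j' := by
      have hm' : (S j j').min' hS0 ∈ E j \ E j' ∪ E j' \ E j := hm
      rcases Finset.mem_union.mp hm' with h | h
      · exact Finset.mem_union_left _ (Finset.mem_sdiff.mp h).1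
      · exact Finset.mem_union_right _ (Finset.mem_sdiff.mp h).1
    have hrange : 1 ≤ (S j j').min' hS0 ∧ (S j j').min' hS0 ≤ n * n + n := by
      rcases Finset.mem_union.mp hm2 with h | h
      · exact hErange j _ h
      · exact hErange j' _ h
    refine ⟨(S j j').min' hS0, ?_, hrange.1, hrange.2, fun e he => (S j j').min'_le e he,
      (S j j').min'_mem hS0⟩
    rw [hdiff j j']
    exact na_sum_pow_eq hna hu0 hu1 hS0 (fun e _ => hcnorm j j' e)
  -- derived distance facts
  have hdist_lb : ∀ j j', j ≠ j' → q ^ (n*n+n) ≤ ‖a j - a j'‖ := by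
    intro j j' hne
    obtain ⟨m, hm, -, hub, -, -⟩ := hdistnorm j j' hne
    rw [hm]
    exact pow_le_pow_of_le_one hq0.le hu1.le hub
  have hdist_ub_in : ∀ i j j', j ≠ j' → A i j ≠ 0 → A i j' ≠ 0 →
      ‖a j - a j'‖ ≤ q ^ (w i + 2) := by
    intro i j j' hne hj hj'
    obtain ⟨m, hm, -, -, -, hmem⟩ := hdistnorm j j' hne
    rw [hm]
    refine pow_le_pow_of_le_one hq0.le hu1.le ?_
    have hmem' : m ∈ E j \ E j' ∪ E j' \ E j := hmem
    have key : ∀ (x y : Fin n), A i x ≠ 0 → A i y ≠ 0 → ∀ e ∈ E x \ E y, w i + 2 ≤ e := by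
      intro x y hx hy e he
      obtain ⟨he1, he2⟩ := Finset.mem_sdiff.mp he
      rcases (hEmem x e).mp he1 with ⟨i', hi', rfl⟩ | rfl
      · have hy0 : A i' y = 0 := by
          by_contra hy0
          exact he2 ((hEmem y _).mpr (Or.inl ⟨i', hy0, rfl⟩))
        have := hlamw i i' x y hx hy hi' hy0
        omega
      · have := hwub i
        omega
    rcases Finset.mem_union.mp hmem' with h | h
    · exact key j j' hj hj' _ h
    · exact key j' j hj' hj _ h
  have hdist_lb_out : ∀ i j j', A i j = 0 → A i j' ≠ 0 →
      q ^ (w i + 1) ≤ ‖a j - a j'‖ := by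
    intro i j j' hj hj'
    have hne : j ≠ j' := by rintro rfl; exact hj' hj
    obtain ⟨m, hm, -, -, hmin, -⟩ := hdistnorm j j' hne
    rw [hm]
    refine pow_le_pow_of_le_one hq0.le hu1.le ?_
    have hin : (w i + 1) ∈ E j' \ E j := by
      refine Finset.mem_sdiff.mpr ⟨(hEmem j' _).mpr (Or.inl ⟨i, hj', rfl⟩), ?_⟩
      intro hcon
      rcases (hEmem j _).mp hcon with ⟨i'', hi'', he⟩ | he
      · have hii : i'' = i := hwinj (by omega)
        rw [hii] at hi''
        exact hi'' hj
      · have := hwub i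
        omega
    exact hmin _ (Finset.mem_union_right _ hin)
  have hanorm : ∀ j, ‖a j‖ = 1 := by
    intro j
    have hsum : ‖∑ e ∈ E j, u ^ e‖ ≤ q := by
      refine na_sum_le hna hq0.le fun e he => ?_
      rw [norm_pow]
      calc q ^ e ≤ q ^ 1 := pow_le_pow_of_le_one hq0.le hu1.le (hErange j e he).1
        _ = q := pow_one q
    have haj : a j = 1 + ∑ e ∈ E j, u ^ e := rfl
    rw [haj, na_add_eq_left hna (by rw [norm_one]; exact lt_of_le_of_lt hsum hu1), norm_one]
  -- the disks and the map
  set rr : ℝ := q ^ (M + 1) with hrr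
  have hrr0 : 0 < rr := pow_pos hq0 _
  have hrr1 : rr < 1 := pow_lt_one₀ hq0.le hu1 (by omega)
  set j0 : Fin n → Fin n := fun i => (F i).min' (hFne i) with hj0def
  have hj0 : ∀ i, A i (j0 i) ≠ 0 := by
    intro i
    have := (F i).min'_mem (hFne i)
    exact (Finset.mem_filter.mp this).2
  set b : Fin n → K := fun i => a (j0 i) with hb
  set al : Fin n → K := fun i => u ^ (w i + 2) * (u⁻¹) ^ (M + 1) with hal
  have hal0 : ∀ i, al i ≠ 0 :=
    fun i => mul_ne_zero (pow_ne_zero _ hu0) (pow_ne_zero _ (inv_ne_zero hu0))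
  have halr : ∀ i, ‖al i‖ * rr = q ^ (w i + 2) := by
    intro i
    have h1 : ‖al i‖ = q ^ (w i + 2) * (q⁻¹) ^ (M + 1) := by
      show ‖u ^ (w i + 2) * (u⁻¹) ^ (M + 1)‖ = _
      rw [norm_mul, norm_pow, norm_pow, norm_inv]
    rw [h1, hrr, mul_assoc, ← mul_pow, inv_mul_cancel₀ hq0.ne', one_pow, mul_one]
  have hdisjD : Pairwise fun i j => Disjoint (closedBall (a i) rr) (closedBall (a j) rr) := by
    intro i j hne
    rw [Set.disjoint_left]
    intro z hzi hzj
    rw [mem_closedBall, dist_eq_norm] at hzi hzj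
    have h1 : ‖a i - a j‖ ≤ rr := by
      refine (htri (a i) z (a j)).trans (max_le ?_ hzj)
      rw [norm_sub_rev]
      exact hzi
    have h2 := hdist_lb i j hne
    have h3 : rr < q ^ (n*n+n) := by
      rw [hrr]
      exact pow_lt_pow_right_of_lt_one₀ hq0 hu1 (by omega)
    linarith
  set f : K → K := fun z =>
    if h : ∃ i, z ∈ closedBall (a i) rr then
      al h.choose * (z - a h.choose) + b h.choose
    else z with hfdef
  have hfD : ∀ i, ∀ z ∈ closedBall (a i) rr, f z = al i * (z - a i) + b i := by
    intro i z hz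
    have hex : ∃ i', z ∈ closedBall (a i') rr := ⟨i, hz⟩
    have heq : hex.choose = i := by
      by_contra hne
      exact Set.disjoint_left.mp (hdisjD hne) hex.choose_spec hz
    calc f z = al hex.choose * (z - a hex.choose) + b hex.choose := dif_pos hex
      _ = al i * (z - a i) + b i := by rw [heq]
  have hfim : ∀ i, f '' closedBall (a i) rr = closedBall (b i) (q ^ (w i + 2)) := by
    intro i
    have h1 : f '' closedBall (a i) rr
        = (fun z => al i * (z - a i) + b i) '' closedBall (a i) rr :=
      Set.image_congr (fun z hz => hfD i z hz)
    rw [h1, affine_image_closedBall (hal0 i) rr, halr i]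
  have hrrle : ∀ i, rr ≤ q ^ (w i + 2) := by
    intro i
    have := hwub i
    rw [hrr]
    exact pow_le_pow_of_le_one hq0.le hu1.le (by omega)
  have hsubB : ∀ i j, A i j ≠ 0 → closedBall (a j) rr ⊆ closedBall (b i) (q ^ (w i + 2)) := by
    intro i j hij z hz
    rw [mem_closedBall, dist_eq_norm] at hz ⊢
    have hb2 : ‖a j - b i‖ ≤ q ^ (w i + 2) := by
      by_cases hjj : j = j0 i
      · have : a j - b i = 0 := by rw [hjj]; show a (j0 i) - a (j0 i) = 0; ring
        rw [this, norm_zero]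
        positivity
      · exact hdist_ub_in i j (j0 i) hjj hij (hj0 i)
    exact (htri z (a j) (b i)).trans (max_le (hz.trans (hrrle i)) hb2)
  have hnotB : ∀ i j, A i j = 0 → ∀ z, z ∈ closedBall (a j) rr →
      z ∉ closedBall (b i) (q ^ (w i + 2)) := by
    intro i j hij z hz hzB
    rw [mem_closedBall, dist_eq_norm] at hz hzB
    have h1 : ‖a j - b i‖ ≤ q ^ (w i + 2) := by
      refine (htri (a j) z (b i)).trans (max_le ?_ hzB)
      rw [norm_sub_rev]
      exact hz.trans (hrrle i)
    have h2 : q ^ (w i + 1) ≤ ‖a j - b i‖ := hdist_lb_out i j (j0 i) hij (hj0 i)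
    have h3 : q ^ (w i + 2) < q ^ (w i + 1) := pow_lt_pow_right_of_lt_one₀ hq0 hu1 (by omega)
    linarith
  -- assemble
  refine ⟨a, fun _ => rr, f, ?_, hdisjD, ?_, ?_, ⟨?_, ?_⟩, ?_⟩
  · intro i
    exact ⟨u ^ (M + 1), pow_ne_zero _ hu0, by rw [norm_pow]⟩
  · intro i
    rw [Set.ssubset_def]
    constructor
    · intro z hz
      rw [mem_closedBall, dist_eq_norm] at hz ⊢
      have h2 := (htri z (a i) 0).trans
        (max_le (hz.trans hrr1.le) (by rw [sub_zero, hanorm i]))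
      exact h2
    · intro hcon
      have h0 : (0:K) ∈ closedBall (0:K) 1 := mem_closedBall_self zero_le_one
      have hmem := hcon h0
      rw [mem_closedBall, dist_eq_norm, zero_sub, norm_neg, hanorm i] at hmem
      linarith
  · intro i
    rw [Set.disjoint_left]
    intro z hz1 hz2
    rw [mem_closedBall, dist_eq_norm] at hz1 hz2
    have hle : rr ≤ q := by
      rw [hrr]
      calc q ^ (M+1) ≤ q ^ 1 := pow_le_pow_of_le_one hq0.le hu1.le (by omega)
        _ = q := pow_one q
    have h2 : ‖a i - 0‖ ≤ max ‖a i - z‖ ‖z - 0‖ := htri (a i) z 0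
    rw [sub_zero, sub_zero] at h2
    rw [sub_zero] at hz2
    have h3 : ‖a i - z‖ ≤ q := by
      rw [norm_sub_rev]
      exact hz1.trans hle
    have h4 : ‖a i‖ ≤ q := h2.trans (max_le h3 hz2)
    rw [hanorm i] at h4
    linarith
  · intro i
    exact ⟨al i, b i - al i * a i, hal0 i, fun z hz => by rw [hfD i z hz]; ring⟩
  · intro i j
    simp only []
    rw [hfim i]
    constructor
    · intro hsub
      have haj : a j ∈ closedBall (a j) rr := mem_closedBall_self hrr0.le
      rcases h01 i j with h0 | h1
      · exact absurd (hsub haj) (hnotB i j h0 (a j) haj)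
      · exact h1
    · intro h1
      exact hsubB i j (by rw [h1]; exact one_ne_zero)
  · intro i
    rw [Set.ssubset_def]
    constructor
    · refine Set.iUnion₂_subset fun j hj => ?_
      rw [hfim i]
      exact hsubB i j hj
    · intro hcon
      set z : K := b i + u ^ M with hzdef
      have hzB : z ∈ f '' closedBall (a i) rr := by
        rw [hfim i, mem_closedBall, dist_eq_norm]
        have h1 : z - b i = u ^ M := by rw [hzdef]; ring
        rw [h1, norm_pow]
        have := hwub i
        exact pow_le_pow_of_le_one hq0.le hu1.le (by omega)
      have hmem := hcon hzB
      rw [Set.mem_iUnion₂] at hmem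
      obtain ⟨j, hj, hzj⟩ := hmem
      rw [mem_closedBall, dist_eq_norm] at hzj
      by_cases hjj : j = j0 i
      · have h1 : z - a j = u ^ M := by
          rw [hzdef, hjj]
          show b i + u ^ M - a (j0 i) = u ^ M
          have hbi : b i = a (j0 i) := rfl
          rw [hbi]; ring
        rw [h1, norm_pow] at hzj
        have hlt : q ^ (M+1) < q ^ M := pow_lt_pow_right_of_lt_one₀ hq0 hu1 (by omega)
        rw [hrr] at hzj
        linarith
      · have hne : j0 i ≠ j := fun h => hjj h.symm
        obtain ⟨m, hm, -, hub, -, -⟩ := hdistnorm (j0 i) j hne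
        have hdiffz : z - a j = (a (j0 i) - a j) + u ^ M := by
          rw [hzdef]
          have hbi : b i = a (j0 i) := rfl
          rw [hbi]; ring
        have hMm : ‖(u:K) ^ M‖ < ‖a (j0 i) - a j‖ := by
          rw [hm, norm_pow]
          exact pow_lt_pow_right_of_lt_one₀ hq0 hu1 (by omega)
        have hnz : ‖z - a j‖ = q ^ m := by
          rw [hdiffz, na_add_eq_left hna hMm, hm]
        rw [hnz] at hzj
        have hgt : rr < q ^ m := by
          rw [hrr]
          exact pow_lt_pow_right_of_lt_one₀ hq0 hu1 (by omega)
        linarith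

end
end

section
/- Let A be an admissible n×n (0,1)-matrix, let D̄_1,…,D̄_n be pairwise disjoint rational closed disks in K with D̄_i ⊊ D̄(0,1) and D̄_i ∩ D̄(0,|𝔲|) = ∅ for each i, and let f : ⋃_{i=1}^n D̄_i → K be linearly compatible to A with ⋃_{j ∈ I_A(i)} D̄_j ⊊ f(D̄_i) for each i. Set D̄_0 = D̄(0,|𝔲|), let f_0 be the identity on D̄_0 and f_i = f|_{D̄_i} for 1 ≤ i ≤ n; choose points a_i ∈ D̄_i for 0 ≤ i ≤ n and elements b_i = x_i/√𝔲 of the quadratic extension K(√𝔲), where x_i ∈ K with |x_i| = diam(D̄_i). For an even integer M define F_M(z) = Σ_{i=0}^n f_i(z)·h_i(z) with h_i(z) = (1 − ((z−a_i)/b_i)^M)^{−1}, so that F_M ∈ K(z). Then there exists an even integer M₀ such that for every even M ≥ M₀ one has F_M(ℙ¹(K)∖⋃_{i=1}^n D̄_i) ⊆ D̄_0; in particular F_M(∞) = 0 and |F_M(z)| ≤ |𝔲| for every z ∈ K∖⋃_{i=1}^n D̄_i. -/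
noncomputable section
open Matrix Metric Filter

variable {K : Type*} [NormedField K]

/-- The glued map `F_M(z) = ∑_{i=0}^{n} f_i(z) · (1 − ((z − a_i)/b_i)^M)⁻¹` for the even
integer `M = 2N`, where `f_0 = id`, `f_i(z) = α_i z + β_i`, and `b_i = x_i/√u`, so that
`((z − a_i)/b_i)^M = ((z − a_i)² · u / x_i²)^N` is expressed inside `K`. -/
def glueMap {n : ℕ} (u a0 x0 : K) (a x αv βv : Fin n → K) (N : ℕ) : K → K := fun z =>
  z * (1 - ((z - a0) ^ 2 * u / x0 ^ 2) ^ N)⁻¹ +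
  ∑ i : Fin n, (αv i * z + βv i) * (1 - ((z - a i) ^ 2 * u / (x i) ^ 2) ^ N)⁻¹

/-- In a nonarchimedean field, `‖a + b‖ = ‖a‖` when `‖b‖ < ‖a‖`. -/
lemma glue_na_add_eq (hna : IsNonarchimedean fun x : K => ‖x‖) {a b : K}
    (h : ‖b‖ < ‖a‖) : ‖a + b‖ = ‖a‖ := by
  refine le_antisymm (le_trans (hna a b) (max_le le_rfl h.le)) ?_
  by_contra hlt
  push_neg at hlt
  have h2 : ‖a‖ ≤ max ‖a + b‖ ‖b‖ := by
    have h3 := hna (a + b) (-b)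
    simpa using h3
  exact absurd h2 (not_le.mpr (max_lt hlt h))

/-- Nonarchimedean bound for finite sums. -/
lemma glue_sum_le (hna : IsNonarchimedean fun x : K => ‖x‖) {ι : Type*}
    (s : Finset ι) (g : ι → K) {c : ℝ} (hc : 0 ≤ c) (h : ∀ i ∈ s, ‖g i‖ ≤ c) :
    ‖∑ i ∈ s, g i‖ ≤ c := by
  classical
  induction s using Finset.induction_on with
  | empty => simpa using hc
  | @insert j s hj ih =>
    rw [Finset.sum_insert hj]
    exact le_trans (hna _ _) (max_le (h j (Finset.mem_insert_self j s))
      (ih fun i hi => h i (Finset.mem_insert_of_mem hi)))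

lemma glue_inv_norm_big (hna : IsNonarchimedean fun x : K => ‖x‖) {t : K}
    (ht : 1 < ‖t‖) {N : ℕ} (hN : N ≠ 0) : ‖(1 - t ^ N)⁻¹‖ = (‖t‖ ^ N)⁻¹ := by
  have h1 : 1 < ‖t ^ N‖ := by rw [norm_pow]; exact one_lt_pow₀ ht hN
  have h2 : (1 : K) - t ^ N = -(t ^ N) + 1 := by ring
  rw [norm_inv, h2, glue_na_add_eq hna (by simpa using h1)]
  simp [norm_pow]

lemma glue_inv_norm_small (hna : IsNonarchimedean fun x : K => ‖x‖) {t : K}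
    (ht : ‖t‖ < 1) {N : ℕ} (hN : N ≠ 0) : ‖(1 - t ^ N)⁻¹‖ = 1 := by
  have h1 : ‖t ^ N‖ < 1 := by rw [norm_pow]; exact pow_lt_one₀ (norm_nonneg t) ht hN
  have h2 : (1 : K) - t ^ N = 1 + -(t ^ N) := by ring
  rw [norm_inv, h2, glue_na_add_eq hna (by simpa using h1)]
  simp

/-- Real estimate for the terms `i ≥ 1` (uniform bound). -/
lemma glue_real1 {U ρ s T C : ℝ} (hU0 : 0 < U) (hU1 : U < 1) (hρ : 0 < ρ)
    (hT1 : 1 / U ≤ T) (hT2 : s / ρ ≤ T) (hC : 0 ≤ C) (M : ℕ) :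
    C * max s 1 * (T ^ (M + 1))⁻¹ ≤ C * max ρ 1 * U ^ M := by
  have hT0 : 0 < T := lt_of_lt_of_le (by positivity) hT1
  have hTM : (T ^ M)⁻¹ ≤ U ^ M := by
    have h := pow_le_pow_left₀ (by positivity : (0:ℝ) ≤ 1 / U) hT1 M
    rw [div_pow, one_pow] at h
    exact (inv_le_comm₀ (by positivity) (by positivity)).mpr (by rwa [one_div] at h)
  have hTinv : T⁻¹ ≤ U :=
    (inv_le_comm₀ hT0 hU0).mpr (by rwa [← one_div])
  rw [pow_succ, mul_inv]
  rcases le_or_gt s 1 with hs | hs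
  · rw [max_eq_right hs]
    have step : (T ^ M)⁻¹ * T⁻¹ ≤ U ^ M * 1 :=
      mul_le_mul hTM (le_trans hTinv hU1.le) (by positivity) (by positivity)
    have h1 : C * 1 * ((T ^ M)⁻¹ * T⁻¹) ≤ C * (U ^ M * 1) := by
      rw [mul_one]
      exact mul_le_mul_of_nonneg_left step hC
    refine le_trans h1 ?_
    have hm : (1:ℝ) ≤ max ρ 1 := le_max_right ρ 1
    nlinarith [pow_nonneg hU0.le M, mul_nonneg hC (pow_nonneg hU0.le M)]
  · rw [max_eq_left hs.le]
    have hs0 : 0 < s := lt_trans one_pos hs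
    have hTinv2 : T⁻¹ ≤ ρ / s :=
      (inv_le_comm₀ hT0 (by positivity)).mpr (by rwa [inv_div])
    have h1 : C * s * ((T ^ M)⁻¹ * T⁻¹) ≤ C * s * (U ^ M * (ρ / s)) :=
      mul_le_mul_of_nonneg_left
        (mul_le_mul hTM hTinv2 (by positivity) (by positivity))
        (mul_nonneg hC hs0.le)
    have h2 : C * s * (U ^ M * (ρ / s)) = C * ρ * U ^ M := by
      field_simp
    refine le_trans h1 (le_of_eq h2 |>.trans ?_)
    have hm : ρ ≤ max ρ 1 := le_max_left ρ 1
    exact mul_le_mul_of_nonneg_right (mul_le_mul_of_nonneg_left hm hC)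
      (pow_nonneg hU0.le M)

/-- Real estimate for the `i = 0` term. -/
lemma glue_real0 {U s : ℝ} (hU0 : 0 < U) (hU1 : U < 1) (hs : 1 ≤ s) {N : ℕ} (hN : N ≠ 0) :
    s * ((s ^ 2 / U) ^ N)⁻¹ ≤ U / s := by
  have hs0 : 0 < s := lt_of_lt_of_le one_pos hs
  have hT1 : 1 ≤ s ^ 2 / U := by
    rw [le_div_iff₀ hU0]
    nlinarith
  have h2 : s ^ 2 / U ≤ (s ^ 2 / U) ^ N := le_self_pow₀ hT1 hN
  have h3 : ((s ^ 2 / U) ^ N)⁻¹ ≤ (s ^ 2 / U)⁻¹ :=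
    inv_anti₀ (by positivity) h2
  rw [inv_div] at h3
  have h4 : s * ((s ^ 2 / U) ^ N)⁻¹ ≤ s * (U / s ^ 2) :=
    mul_le_mul_of_nonneg_left h3 hs0.le
  have h5 : s * (U / s ^ 2) = U / s := by
    field_simp
  rw [h5] at h4
  exact h4

/-- Real estimate for the terms `i ≥ 1` (decay at infinity). -/
lemma glue_real2 {ρ s T C : ℝ} (hρ : 0 < ρ) (hs : 1 ≤ s) (hT1 : 1 ≤ T)
    (hT2 : s / ρ ≤ T) (hC : 0 ≤ C) {N : ℕ} (hN : 2 ≤ N) :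
    C * s * (T ^ N)⁻¹ ≤ C * ρ ^ 2 / s := by
  have hs0 : 0 < s := lt_of_lt_of_le one_pos hs
  have h1 : (s / ρ) ^ 2 ≤ T ^ N :=
    le_trans (pow_le_pow_left₀ (by positivity) hT2 2) (pow_le_pow_right₀ hT1 hN)
  have h2 : (T ^ N)⁻¹ ≤ ρ ^ 2 / s ^ 2 := by
    have h3 : (T ^ N)⁻¹ ≤ ((s / ρ) ^ 2)⁻¹ := inv_anti₀ (by positivity) h1
    rwa [div_pow, inv_div] at h3
  have h4 : C * s * (T ^ N)⁻¹ ≤ C * s * (ρ ^ 2 / s ^ 2) :=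
    mul_le_mul_of_nonneg_left h2 (mul_nonneg hC hs0.le)
  have h5 : C * s * (ρ ^ 2 / s ^ 2) = C * ρ ^ 2 / s := by
    field_simp
  rw [h5] at h4
  exact h4

/-- **Lemma.**  With a linearly compatible map as in the construction, for every
sufficiently large even integer `M = 2N` the rational map `F_M ∈ K(z)` maps
`ℙ¹(K) ∖ ⋃ D̄_i` into `D̄_0 = D̄(0,|u|)`: in particular `|F_M(z)| ≤ |u|` for every
`z ∈ K ∖ ⋃ D̄_i`, and `F_M(∞) = 0` (the value at infinity being the limit of `F_M`
along the cobounded filter). -/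
theorem glueMap_maps_outside_into_small_disk
    [CompleteSpace K] [CharZero K]
    (hna : IsNonarchimedean fun x : K => ‖x‖)
    (u : K) (hu0 : u ≠ 0) (hu1 : ‖u‖ < 1)
    (hgen : ∀ x : K, x ≠ 0 → ∃ m : ℤ, ‖x‖ = ‖u‖ ^ m)
    {n : ℕ} (A : Matrix (Fin n) (Fin n) ℝ)
    (hA : IsAdmissible A) (h01 : ∀ i j, A i j = 0 ∨ A i j = 1)
    (cen : Fin n → K) (r : Fin n → ℝ)
    (hrat : ∀ i, ∃ y : K, y ≠ 0 ∧ ‖y‖ = r i)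
    (hdisj : Pairwise fun i j => Disjoint (Metric.closedBall (cen i) (r i))
      (Metric.closedBall (cen j) (r j)))
    (hsub : ∀ i, Metric.closedBall (cen i) (r i) ⊂ Metric.closedBall (0 : K) 1)
    (hdisj0 : ∀ i, Disjoint (Metric.closedBall (cen i) (r i))
      (Metric.closedBall (0 : K) ‖u‖))
    (f : K → K)
    (hcomp : LinearlyCompatible A (fun i => Metric.closedBall (cen i) (r i)) f)
    (hprop : ∀ i, (⋃ j ∈ {j | A i j ≠ 0}, Metric.closedBall (cen j) (r j))
      ⊂ f '' Metric.closedBall (cen i) (r i))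
    (αv βv : Fin n → K) (hα : ∀ i, αv i ≠ 0)
    (haff : ∀ i, ∀ z ∈ Metric.closedBall (cen i) (r i), f z = αv i * z + βv i)
    (a0 : K) (ha0 : a0 ∈ Metric.closedBall (0 : K) ‖u‖)
    (a : Fin n → K) (ha : ∀ i, a i ∈ Metric.closedBall (cen i) (r i))
    (x0 : K) (hx0 : ‖x0‖ = ‖u‖)
    (x : Fin n → K) (hx : ∀ i, ‖x i‖ = r i) :
    ∃ N₀ : ℕ, ∀ N : ℕ, N₀ ≤ N →
      (∀ z : K, z ∉ (⋃ i, Metric.closedBall (cen i) (r i)) →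
        glueMap u a0 x0 a x αv βv N z ∈ Metric.closedBall (0 : K) ‖u‖) ∧
      Tendsto (glueMap u a0 x0 a x αv βv N) (Bornology.cobounded K) (nhds 0) := by
  classical
  have hu : (0:ℝ) < ‖u‖ := norm_pos_iff.mpr hu0
  have hune : ‖u‖ ≠ 0 := ne_of_gt hu
  have hrpos : ∀ i, 0 < r i := by
    intro i
    obtain ⟨y, hy, hyr⟩ := hrat i
    rw [← hyr]
    exact norm_pos_iff.mpr hy
  have ha0' : ‖a0‖ ≤ ‖u‖ := by
    have h := ha0
    rwa [Metric.mem_closedBall, dist_zero_right] at h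
  -- discreteness of the value group
  have hdisc : ∀ (w : K) (ρ : ℝ), (∃ y : K, y ≠ 0 ∧ ‖y‖ = ρ) → ρ < ‖w‖ → ρ ≤ ‖w‖ * ‖u‖ := by
    rintro w ρ ⟨y, hy, rfl⟩ hlt
    have hw : w ≠ 0 := by
      rintro rfl
      simp only [norm_zero] at hlt
      exact absurd hlt (not_lt.mpr (norm_nonneg y))
    obtain ⟨m, hm⟩ := hgen w hw
    obtain ⟨k, hk⟩ := hgen y hy
    rw [hm] at hlt ⊢
    rw [hk] at hlt ⊢
    have hmk : m + 1 ≤ k := by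
      have h := (zpow_lt_zpow_iff_right_of_lt_one₀ hu hu1).mp hlt
      omega
    calc ‖u‖ ^ k ≤ ‖u‖ ^ (m + 1) := zpow_le_zpow_right_of_le_one₀ hu hu1.le hmk
      _ = ‖u‖ ^ m * ‖u‖ := zpow_add_one₀ hune m
  -- being outside a disk
  have hout : ∀ (z : K) (i : Fin n), z ∉ Metric.closedBall (cen i) (r i) →
      r i < ‖z - a i‖ := by
    intro z i hz
    by_contra hle
    push_neg at hle
    apply hz
    rw [Metric.mem_closedBall, dist_eq_norm]
    have hai : ‖a i - cen i‖ ≤ r i := by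
      have h := ha i
      rwa [Metric.mem_closedBall, dist_eq_norm] at h
    calc ‖z - cen i‖ = ‖(z - a i) + (a i - cen i)‖ := by rw [sub_add_sub_cancel]
      _ ≤ max ‖z - a i‖ ‖a i - cen i‖ := hna _ _
      _ ≤ r i := max_le hle hai
  -- norm of t i
  have htnorm : ∀ (z : K) (i : Fin n),
      ‖(z - a i) ^ 2 * u / (x i) ^ 2‖ = ‖z - a i‖ ^ 2 * ‖u‖ / (r i) ^ 2 := by
    intro z i
    rw [norm_div, norm_mul, norm_pow, norm_pow, hx i]
  have ht0norm : ∀ z : K,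
      ‖(z - a0) ^ 2 * u / x0 ^ 2‖ = ‖z - a0‖ ^ 2 / ‖u‖ := by
    intro z
    rw [norm_div, norm_mul, norm_pow, norm_pow, hx0]
    field_simp
  -- the lower bounds on ‖t i‖ for z outside the i-th disk
  have hTbound : ∀ (z : K) (i : Fin n), z ∉ Metric.closedBall (cen i) (r i) →
      1 / ‖u‖ ≤ ‖(z - a i) ^ 2 * u / (x i) ^ 2‖ ∧
      ‖z - a i‖ / r i ≤ ‖(z - a i) ^ 2 * u / (x i) ^ 2‖ := by
    intro z i hz
    have h1 : r i < ‖z - a i‖ := hout z i hz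
    have h2 : r i ≤ ‖z - a i‖ * ‖u‖ := hdisc _ _ (hrat i) h1
    have hs0 : 0 < ‖z - a i‖ := lt_trans (hrpos i) h1
    constructor
    · rw [htnorm z i, div_le_div_iff₀ hu (pow_pos (hrpos i) 2)]
      nlinarith [mul_le_mul h2 h2 (hrpos i).le (mul_nonneg hs0.le hu.le)]
    · rw [htnorm z i, div_le_div_iff₀ (hrpos i) (pow_pos (hrpos i) 2)]
      nlinarith [mul_le_mul_of_nonneg_left h2 hs0.le, hrpos i]
  have hone_lt : (1:ℝ) < 1 / ‖u‖ := one_lt_one_div hu hu1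
  -- the constants
  set Cc : Fin n → ℝ := fun i => max ‖αv i‖ (max ‖βv i‖ ‖αv i * a i + βv i‖) with hCcdef
  have hCc0 : ∀ i, 0 ≤ Cc i := fun i => le_trans (norm_nonneg _) (le_max_left _ _)
  set Bc : Fin n → ℝ := fun i => Cc i * max (r i) 1 with hBcdef
  have hBc0 : ∀ i, 0 ≤ Bc i := fun i =>
    mul_nonneg (hCc0 i) (le_trans zero_le_one (le_max_right _ _))
  set S : ℝ := max (∑ i, Bc i) 1 with hSdef
  have hS1 : (1:ℝ) ≤ S := le_max_right _ _
  have hS0 : (0:ℝ) < S := lt_of_lt_of_le one_pos hS1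
  have hBS : ∀ i, Bc i ≤ S := fun i =>
    le_trans (Finset.single_le_sum (fun j _ => hBc0 j) (Finset.mem_univ i))
      (le_max_left _ _)
  obtain ⟨k₀, hk₀⟩ := exists_pow_lt_of_lt_one (x := ‖u‖ / S) (by positivity) hu1
  refine ⟨k₀ + 2, fun N hN => ?_⟩
  have hN1 : N ≠ 0 := by omega
  have hN2 : 2 ≤ N := by omega
  obtain ⟨M, hM⟩ : ∃ M, N = M + 1 := ⟨N - 1, by omega⟩
  have hupow : ‖u‖ ^ M ≤ ‖u‖ / S := by
    calc ‖u‖ ^ M ≤ ‖u‖ ^ k₀ := pow_le_pow_of_le_one hu.le hu1.le (by omega)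
      _ ≤ ‖u‖ / S := hk₀.le
  -- linear bound on the numerators
  have hlin : ∀ (z : K) (i : Fin n),
      ‖αv i * z + βv i‖ ≤ Cc i * max ‖z - a i‖ 1 := by
    intro z i
    have he : αv i * z + βv i = αv i * (z - a i) + (αv i * a i + βv i) := by ring
    rw [he]
    refine le_trans (hna _ _) (max_le ?_ ?_)
    · simp only [norm_mul]
      exact mul_le_mul (le_max_left _ _) (le_max_left _ _) (norm_nonneg _) (hCc0 i)
    · have hle : ‖αv i * a i + βv i‖ ≤ Cc i :=
        le_trans (le_max_right ‖βv i‖ ‖αv i * a i + βv i‖)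
          (le_max_right ‖αv i‖ (max ‖βv i‖ ‖αv i * a i + βv i‖))
      have hgoal : ‖αv i * a i + βv i‖ ≤ Cc i * max ‖z - a i‖ 1 :=
        le_trans hle (le_mul_of_one_le_right (hCc0 i) (le_max_right ‖z - a i‖ 1))
      exact hgoal
  -- bound for the i-th term when z is outside the i-th disk
  have termI : ∀ (z : K) (i : Fin n), z ∉ Metric.closedBall (cen i) (r i) →
      ‖(αv i * z + βv i) * (1 - ((z - a i) ^ 2 * u / (x i) ^ 2) ^ N)⁻¹‖ ≤ ‖u‖ := by
    intro z i hzi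
    obtain ⟨hT1, hT2⟩ := hTbound z i hzi
    have hTgt1 : 1 < ‖(z - a i) ^ 2 * u / (x i) ^ 2‖ := lt_of_lt_of_le hone_lt hT1
    have hTpos : (0:ℝ) < ‖(z - a i) ^ 2 * u / (x i) ^ 2‖ := lt_trans one_pos hTgt1
    rw [norm_mul, glue_inv_norm_big hna hTgt1 hN1]
    calc ‖αv i * z + βv i‖ * (‖(z - a i) ^ 2 * u / (x i) ^ 2‖ ^ N)⁻¹
        ≤ (Cc i * max ‖z - a i‖ 1) * (‖(z - a i) ^ 2 * u / (x i) ^ 2‖ ^ N)⁻¹ := by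
          exact mul_le_mul_of_nonneg_right (hlin z i)
            (inv_nonneg.mpr (pow_nonneg hTpos.le N))
      _ ≤ Cc i * max (r i) 1 * ‖u‖ ^ M := by
          rw [hM]
          exact glue_real1 hu hu1 (hrpos i) hT1 hT2 (hCc0 i) M
      _ ≤ S * (‖u‖ / S) := mul_le_mul (hBS i) hupow (by positivity) hS0.le
      _ = ‖u‖ := by field_simp
  -- bound for the 0-th term, valid for every z
  have term0 : ∀ z : K,
      ‖z * (1 - ((z - a0) ^ 2 * u / x0 ^ 2) ^ N)⁻¹‖ ≤ ‖u‖ := by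
    intro z
    rcases le_or_gt ‖z - a0‖ ‖u‖ with hcase | hcase
    · have hts : ‖(z - a0) ^ 2 * u / x0 ^ 2‖ < 1 := by
        rw [ht0norm z, div_lt_one hu]
        nlinarith [norm_nonneg (z - a0)]
      rw [norm_mul, glue_inv_norm_small hna hts hN1, mul_one]
      calc ‖z‖ = ‖(z - a0) + a0‖ := by rw [sub_add_cancel]
        _ ≤ max ‖z - a0‖ ‖a0‖ := hna _ _
        _ ≤ ‖u‖ := max_le hcase ha0'
    · have h1 : 1 ≤ ‖z - a0‖ := by
        have h2 : ‖u‖ ≤ ‖z - a0‖ * ‖u‖ := hdisc _ _ ⟨u, hu0, rfl⟩ hcase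
        nlinarith
      have hts : 1 < ‖(z - a0) ^ 2 * u / x0 ^ 2‖ := by
        rw [ht0norm z, lt_div_iff₀ hu]
        nlinarith
      rw [norm_mul, glue_inv_norm_big hna hts hN1, ht0norm z]
      have hz : ‖z‖ ≤ ‖z - a0‖ := by
        calc ‖z‖ = ‖(z - a0) + a0‖ := by rw [sub_add_cancel]
          _ ≤ max ‖z - a0‖ ‖a0‖ := hna _ _
          _ ≤ ‖z - a0‖ := max_le le_rfl (by linarith)
      calc ‖z‖ * ((‖z - a0‖ ^ 2 / ‖u‖) ^ N)⁻¹
          ≤ ‖z - a0‖ * ((‖z - a0‖ ^ 2 / ‖u‖) ^ N)⁻¹ := by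
            exact mul_le_mul_of_nonneg_right hz (by positivity)
        _ ≤ ‖u‖ / ‖z - a0‖ := glue_real0 hu hu1 h1 hN1
        _ ≤ ‖u‖ := div_le_self hu.le h1
  constructor
  · -- part 1 : z outside all the disks
    intro z hz
    rw [Metric.mem_closedBall, dist_zero_right]
    simp only [glueMap]
    refine le_trans (hna _ _) (max_le (term0 z) ?_)
    refine glue_sum_le hna Finset.univ _ hu.le (fun i _ => ?_)
    exact termI z i (fun h => hz (Set.mem_iUnion.mpr ⟨i, h⟩))
  · -- part 2 : the limit at infinity is 0
    rw [NormedAddCommGroup.tendsto_nhds_zero]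
    intro ε hε
    set E : ℝ := max (∑ i, Cc i * (r i) ^ 2) 1 + ‖u‖ with hEdef
    have hE1 : (1:ℝ) ≤ E := le_add_of_nonneg_right hu.le |>.trans' (le_max_right _ _)
    have hE0 : (0:ℝ) < E := lt_of_lt_of_le one_pos hE1
    have hEi : ∀ i, Cc i * (r i) ^ 2 ≤ E := by
      intro i
      refine le_trans (Finset.single_le_sum
        (fun j _ => mul_nonneg (hCc0 j) (sq_nonneg _)) (Finset.mem_univ i)) ?_
      exact le_trans (le_max_left _ _) (le_add_of_nonneg_right hu.le)
    have hEu : ‖u‖ ≤ E := le_add_of_nonneg_left (le_trans zero_le_one (le_max_right _ _))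
    set R : ℝ := max (1 + ‖a0‖ + ∑ i, (‖a i‖ + ‖cen i‖ + r i)) (E / ε) with hRdef
    have hfil : ∀ᶠ z : K in Bornology.cobounded K, R < ‖z‖ :=
      tendsto_norm_cobounded_atTop.eventually (eventually_gt_atTop R)
    filter_upwards [hfil] with z hzR
    have hsumnn : (0:ℝ) ≤ ∑ i, (‖a i‖ + ‖cen i‖ + r i) :=
      Finset.sum_nonneg fun i _ =>
        add_nonneg (add_nonneg (norm_nonneg _) (norm_nonneg _)) (hrpos i).le
    have hR1 : 1 + ‖a0‖ + ∑ i, (‖a i‖ + ‖cen i‖ + r i) ≤ R := le_max_left _ _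
    have hz1 : 1 ≤ ‖z‖ := by
      have := norm_nonneg a0
      linarith
    have hsz : (0:ℝ) < ‖z‖ := lt_of_lt_of_le one_pos hz1
    have ha0z : ‖a0‖ < ‖z‖ := by linarith
    have hbig : ∀ i : Fin n, ‖a i‖ < ‖z‖ ∧ ‖cen i‖ < ‖z‖ ∧ r i < ‖z‖ := by
      intro i
      have hsle := Finset.single_le_sum
        (f := fun j => ‖a j‖ + ‖cen j‖ + r j)
        (fun j _ => add_nonneg (add_nonneg (norm_nonneg _) (norm_nonneg _)) (hrpos j).le)
        (Finset.mem_univ i)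
      have hsle' : ‖a i‖ + ‖cen i‖ + r i ≤ ∑ j, (‖a j‖ + ‖cen j‖ + r j) := hsle
      have h1 := norm_nonneg (a i)
      have h2 := norm_nonneg (cen i)
      have h3 := (hrpos i).le
      have h4 := norm_nonneg a0
      refine ⟨by linarith, by linarith, by linarith⟩
    -- z is outside every disk
    have hzout : ∀ i : Fin n, z ∉ Metric.closedBall (cen i) (r i) := by
      intro i hmem
      rw [Metric.mem_closedBall, dist_eq_norm] at hmem
      have hzc : ‖z - cen i‖ = ‖z‖ := by
        have h := glue_na_add_eq hna (a := z) (b := -(cen i))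
          (by simpa using (hbig i).2.1)
        simpa [sub_eq_add_neg] using h
      rw [hzc] at hmem
      exact absurd hmem (not_le.mpr (hbig i).2.2)
    have hzai : ∀ i : Fin n, ‖z - a i‖ = ‖z‖ := by
      intro i
      have h := glue_na_add_eq hna (a := z) (b := -(a i)) (by simpa using (hbig i).1)
      simpa [sub_eq_add_neg] using h
    have hza0 : ‖z - a0‖ = ‖z‖ := by
      have h := glue_na_add_eq hna (a := z) (b := -a0) (by simpa using ha0z)
      simpa [sub_eq_add_neg] using h
    -- each term is at most E / ‖z‖
    have hEdiv : (0:ℝ) ≤ E / ‖z‖ := by positivity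
    have hterm0' : ‖z * (1 - ((z - a0) ^ 2 * u / x0 ^ 2) ^ N)⁻¹‖ ≤ E / ‖z‖ := by
      have hts : 1 < ‖(z - a0) ^ 2 * u / x0 ^ 2‖ := by
        rw [ht0norm z, lt_div_iff₀ hu, hza0]
        nlinarith
      rw [norm_mul, glue_inv_norm_big hna hts hN1, ht0norm z, hza0]
      calc ‖z‖ * ((‖z‖ ^ 2 / ‖u‖) ^ N)⁻¹ ≤ ‖u‖ / ‖z‖ := glue_real0 hu hu1 hz1 hN1
        _ ≤ E / ‖z‖ := by gcongr
    have htermI' : ∀ i : Fin n,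
        ‖(αv i * z + βv i) * (1 - ((z - a i) ^ 2 * u / (x i) ^ 2) ^ N)⁻¹‖ ≤ E / ‖z‖ := by
      intro i
      obtain ⟨hT1, hT2⟩ := hTbound z i (hzout i)
      rw [hzai i] at hT2
      have hTgt1 : 1 < ‖(z - a i) ^ 2 * u / (x i) ^ 2‖ := lt_of_lt_of_le hone_lt hT1
      have hTpos : (0:ℝ) < ‖(z - a i) ^ 2 * u / (x i) ^ 2‖ := lt_trans one_pos hTgt1
      have hlin' : ‖αv i * z + βv i‖ ≤ Cc i * ‖z‖ := by
        refine le_trans (hlin z i) ?_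
        rw [hzai i, max_eq_left hz1]
      rw [norm_mul, glue_inv_norm_big hna hTgt1 hN1]
      calc ‖αv i * z + βv i‖ * (‖(z - a i) ^ 2 * u / (x i) ^ 2‖ ^ N)⁻¹
          ≤ (Cc i * ‖z‖) * (‖(z - a i) ^ 2 * u / (x i) ^ 2‖ ^ N)⁻¹ := by
            exact mul_le_mul_of_nonneg_right hlin'
              (inv_nonneg.mpr (pow_nonneg hTpos.le N))
        _ ≤ Cc i * (r i) ^ 2 / ‖z‖ :=
            glue_real2 (hrpos i) hz1 hTgt1.le hT2 (hCc0 i) hN2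
        _ ≤ E / ‖z‖ := by gcongr; exact hEi i
    -- conclude
    have hsum' : ‖glueMap u a0 x0 a x αv βv N z‖ ≤ E / ‖z‖ := by
      simp only [glueMap]
      refine le_trans (hna _ _) (max_le hterm0' ?_)
      exact glue_sum_le hna Finset.univ _ hEdiv (fun i _ => htermI' i)
    have hRe : E / ε < ‖z‖ := lt_of_le_of_lt (le_max_right _ _) hzR
    rw [div_lt_iff₀ hε] at hRe
    refine lt_of_le_of_lt hsum' ?_
    rw [div_lt_iff₀ hsz]
    linarith


end
end
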